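/- arXiv:1710.04146 — 3 statements merged into one kernel-verified Lean document; each statement's English description precedes it below -/
import Mathlib

section
/- Let d be a positive integer and let Box = conv{e₁, −e₁, …, e_d, −e_d} ⊆ ℝ^d be the d-dimensional cross polytope, where e₁,…,e_d are the standard basis vectors. Then there exists normalized Fano data on Box consisting of exactly 4d functions. (Explicitly, one may take, for 0 ≤ j ≤ d−2, f_{1+4j}(x) = f_{2+4j}(x) = f_{3+4j}(x) = f_{4+4j}(x) = min{1, x_{j+1} + 1}, together with f_{4d−3}(x) = f_{4d−2}(x) = f_{4d−1}(x) = min{1, x_d + 1} and f_{4d}(x) = min{1, x_d + 1} − 2∑_{k=1}^{d} x_k.) In particular, the bound n ≤ c(Box) = 4d is attained on the cross polytope. -/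
/-!
The cross polytope is the unit ball of the `ℓ¹` norm. Each function `x ↦ min {1, xⱼ + 1} + ⟨x, u⟩`
with `u` integral is concave and equals the convex combination of its values at `0, ±e₁, …, ±e_d`
with the barycentric weights `1 - ‖x‖₁, xᵢ⁺, xᵢ⁻`, so it is the upper boundary of the convex hull
of these lattice points of its graph. Its two facets `t = 1 + ⟨x, u⟩` and `t = xⱼ + 1 + ⟨x, u⟩`
are at height one. Taking four copies for each coordinate and shearing one of them by
`-2 ∑ₖ xₖ`, the `4d` functions add up to `4d - 2‖x‖₁`, which is `> 4d - 2` in the interior and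
`= 4d - 2` on the boundary.
-/

open scoped BigOperators

noncomputable section

/-- Embedding of a lattice point of `ℤ^d × ℤ` into `ℝ^d × ℝ`. -/
def latticeEmbed (d : ℕ) (p : (Fin d → ℤ) × ℤ) : (Fin d → ℝ) × ℝ :=
  (fun i => (p.1 i : ℝ), (p.2 : ℝ))

/-- `Box ⊆ ℝ^d` is a lattice polytope: the convex hull of a finite set of lattice points. -/
def IsLatticePolytope (d : ℕ) (Box : Set (Fin d → ℝ)) : Prop :=
  ∃ S : Finset (Fin d → ℤ),
    Box = convexHull ℝ ((fun v : Fin d → ℤ => fun i => (v i : ℝ)) '' (S : Set (Fin d → ℤ)))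

/-- The pairing of `x ∈ ℝ^d` with an integral vector `u ∈ ℤ^d`. -/
def dotZ (d : ℕ) (x : Fin d → ℝ) (u : Fin d → ℤ) : ℝ := ∑ i, x i * (u i : ℝ)

/-- `f` is an integral concave piecewise-affine function on `Box`: there is a finite set
`S ⊆ ℤ^d × ℤ` such that `Box` is the projection of `conv S` and `f x` is the largest `t`
with `(x, t) ∈ conv S`. -/
def IsICPA (d : ℕ) (Box : Set (Fin d → ℝ)) (f : (Fin d → ℝ) → ℝ) : Prop :=
  ∃ S : Finset ((Fin d → ℤ) × ℤ),
    Prod.fst '' (convexHull ℝ (latticeEmbed d '' (S : Set ((Fin d → ℤ) × ℤ)))) = Box ∧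
    ∀ x ∈ Box,
      IsGreatest {t : ℝ | (x, t) ∈ convexHull ℝ (latticeEmbed d '' (S : Set ((Fin d → ℤ) × ℤ)))}
        (f x)

/-- Every facet of the graph of `f` lies at height one. -/
def AtHeightOne (d : ℕ) (Box : Set (Fin d → ℝ)) (f : (Fin d → ℝ) → ℝ) : Prop :=
  ∀ x ∈ Box, ∃ (u : Fin d → ℤ) (m : ℤ),
    |dotZ d x u + (m : ℝ) * f x| = 1 ∧
    ∀ y ∈ Box, dotZ d y u + (m : ℝ) * f y ≤ dotZ d x u + (m : ℝ) * f x

/-- A combinatorial divisorial polytope (CDP) with base in `ℝ^d`. -/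
structure CDP (d : ℕ) where
  box : Set (Fin d → ℝ)
  funcs : List ((Fin d → ℝ) → ℝ)
  lattice : IsLatticePolytope d box
  fullDim : (interior box).Nonempty
  icpa : ∀ f ∈ funcs, IsICPA d box f
  posSum : ∀ x ∈ interior box, 0 < (funcs.map (fun f => f x)).sum

/-- Two functions agree on a set. -/
def EqOnBox (d : ℕ) (B : Set (Fin d → ℝ)) (f g : (Fin d → ℝ) → ℝ) : Prop :=
  ∀ x ∈ B, f x = g x

/-- Move (i): addition of the zero function. -/
def MoveZero (d : ℕ) (P Q : CDP d) : Prop :=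
  Q.box = P.box ∧
    List.Forall₂ (EqOnBox d P.box) Q.funcs (P.funcs ++ [fun _ => (0 : ℝ)])

/-- Move (ii): permutation of the functions. -/
def MovePerm (d : ℕ) (P Q : CDP d) : Prop :=
  Q.box = P.box ∧ ∃ L, List.Perm L P.funcs ∧ List.Forall₂ (EqOnBox d P.box) Q.funcs L

/-- Move (iii): integral affine transformation of the base. -/
def MoveAffine (d : ℕ) (P Q : CDP d) : Prop :=
  ∃ (A B : Matrix (Fin d) (Fin d) ℤ) (t : Fin d → ℤ),
    A * B = 1 ∧ B * A = 1 ∧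
    Q.box = (fun x : Fin d → ℝ => fun i => (∑ j, (A i j : ℝ) * x j) + (t i : ℝ)) '' P.box ∧
    List.Forall₂ (EqOnBox d Q.box) Q.funcs
      (P.funcs.map (fun f => f ∘ fun x : Fin d → ℝ => fun i => ∑ j, (B i j : ℝ) * (x j - (t j : ℝ))))

/-- Move (iv): translation by integers summing to zero. -/
def MoveTranslate (d : ℕ) (P Q : CDP d) : Prop :=
  Q.box = P.box ∧ ∃ α : List ℤ, α.length = P.funcs.length ∧ α.sum = 0 ∧
    List.Forall₂ (EqOnBox d P.box) Q.funcs
      (List.zipWith (fun f (a : ℤ) => fun x => f x + (a : ℝ)) P.funcs α)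

/-- Move (v): shearing by a covector with integral coefficients summing to zero. -/
def MoveShear (d : ℕ) (P Q : CDP d) : Prop :=
  Q.box = P.box ∧ ∃ (v : Fin d → ℤ) (β : List ℤ), β.length = P.funcs.length ∧ β.sum = 0 ∧
    List.Forall₂ (EqOnBox d P.box) Q.funcs
      (List.zipWith (fun f (b : ℤ) => fun x => f x + (b : ℝ) * dotZ d x v) P.funcs β)

/-- One elementary move between CDPs. -/
def CDPMove (d : ℕ) (P Q : CDP d) : Prop :=
  MoveZero d P Q ∨ MovePerm d P Q ∨ MoveAffine d P Q ∨ MoveTranslate d P Q ∨ MoveShear d P Q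

/-- Equivalence of CDPs: the smallest equivalence relation generated by the moves. -/
def CDPEquiv (d : ℕ) : CDP d → CDP d → Prop := Relation.EqvGen (CDPMove d)

/-- The on-the-nose Fano conditions for a CDP. -/
def IsFanoWitness (d : ℕ) (P : CDP d) : Prop :=
  ∃ a : List ℤ, a.sum = -2 ∧
    (0 : Fin d → ℝ) ∈ interior P.box ∧
    List.Forall₂ (fun f (ai : ℤ) =>
      AtHeightOne d P.box (fun x => f x + (ai : ℝ) + 1) ∧ 0 < f 0 + (ai : ℝ) + 1)
      P.funcs a ∧
    ∀ x ∈ frontier P.box,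
      (P.funcs.map (fun f => f x)).sum = 0 ∨
      ∃ u : Fin d → ℤ, dotZ d x u = 1 ∧ ∀ y ∈ P.box, dotZ d y u ≤ 1

/-- A CDP is Fano if it is equivalent to one satisfying the Fano conditions. -/
def IsFano (d : ℕ) (P : CDP d) : Prop := ∃ Q : CDP d, CDPEquiv d P Q ∧ IsFanoWitness d Q

/-- A CDP is toric if it is equivalent to one with at most two functions. -/
def IsToric (d : ℕ) (P : CDP d) : Prop := ∃ Q : CDP d, CDPEquiv d P Q ∧ Q.funcs.length ≤ 2

/-- `f` agrees on `Box` with an affine function with integral slope and constant. -/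
def IsIntegralAffineOn (d : ℕ) (Box : Set (Fin d → ℝ)) (f : (Fin d → ℝ) → ℝ) : Prop :=
  ∃ (u : Fin d → ℤ) (c : ℤ), ∀ x ∈ Box, f x = dotZ d x u + (c : ℝ)

/-- Normalized Fano data on `Box`: the translated functions `Ψᵢ' = Ψᵢ + aᵢ + 1` of a
normalized Fano CDP. -/
def NormalizedFanoData (d n : ℕ) (Box : Set (Fin d → ℝ))
    (f : Fin n → (Fin d → ℝ) → ℝ) : Prop :=
  (∀ i, IsICPA d Box (f i)) ∧
  (∀ i, AtHeightOne d Box (f i)) ∧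
  (∀ i, 0 < f i 0) ∧
  (∀ i, ¬ IsIntegralAffineOn d Box (f i)) ∧
  (∀ x ∈ Box, (n : ℝ) - 2 ≤ ∑ i, f i x) ∧
  (∀ x ∈ interior Box, (n : ℝ) - 2 < ∑ i, f i x) ∧
  (∀ x ∈ frontier Box,
    (∑ i, f i x) = (n : ℝ) - 2 ∨
    ∃ u : Fin d → ℤ, dotZ d x u = 1 ∧ ∀ y ∈ Box, dotZ d y u ≤ 1)

/-- `α_v = min{1, max{α ≥ 0 : ±αv ∈ Box}}`. -/
def alphaV (d : ℕ) (Box : Set (Fin d → ℝ)) (v : Fin d → ℤ) : ℝ :=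
  min 1 (sSup {α : ℝ | 0 ≤ α ∧ (fun i => α * (v i : ℝ)) ∈ Box ∧
    (fun i => -(α * (v i : ℝ))) ∈ Box})

/-- A primitive integral vector: the gcd of its coordinates is 1. -/
def IsPrimitive (d : ℕ) (v : Fin d → ℤ) : Prop := Finset.univ.gcd v = 1

/-- `f` restricted to `Box ∩ ℝ·v` is affine. -/
def AffineOnLine (d : ℕ) (Box : Set (Fin d → ℝ)) (v : Fin d → ℤ)
    (f : (Fin d → ℝ) → ℝ) : Prop :=
  ∃ s c : ℝ, ∀ t : ℝ, (fun i => t * (v i : ℝ)) ∈ Box →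
    f (fun i => t * (v i : ℝ)) = s * t + c

/-- The interval `[a,b]` as a subset of `ℝ¹ = (Fin 1 → ℝ)`. -/
def intervalBox (a b : ℤ) : Set (Fin 1 → ℝ) := {p : Fin 1 → ℝ | (a : ℝ) ≤ p 0 ∧ p 0 ≤ (b : ℝ)}

/-- The `d`-dimensional cross polytope `conv{±e₁, …, ±e_d}`. -/
def crossPolytope (d : ℕ) : Set (Fin d → ℝ) :=
  convexHull ℝ {x : Fin d → ℝ | ∃ j : Fin d, x = Pi.single j 1 ∨ x = -Pi.single j 1}

section General

variable {d : ℕ}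

def dotZLinear (d : ℕ) (u : Fin d → ℤ) : (Fin d → ℝ) →ₗ[ℝ] ℝ where
  toFun x := dotZ d x u
  map_add' x y := by simp only [dotZ, Pi.add_apply, add_mul, Finset.sum_add_distrib]
  map_smul' c x := by simp only [dotZ, Pi.smul_apply, smul_eq_mul, Finset.mul_sum, mul_assoc,
    RingHom.id_apply]

@[simp]
lemma dotZLinear_apply (u : Fin d → ℤ) (x : Fin d → ℝ) : dotZLinear d u x = dotZ d x u := rfl

lemma dotZ_zero_left (u : Fin d → ℤ) : dotZ d 0 u = 0 := by
  simp [dotZ]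

lemma dotZ_neg_left (x : Fin d → ℝ) (u : Fin d → ℤ) : dotZ d (-x) u = -dotZ d x u := by
  simp [dotZ]

lemma dotZ_single_left (i : Fin d) (u : Fin d → ℤ) : dotZ d (Pi.single i 1) u = u i := by
  simp [dotZ, Pi.single_apply]

lemma dotZ_neg_right (x : Fin d → ℝ) (u : Fin d → ℤ) : dotZ d x (-u) = -dotZ d x u := by
  simp [dotZ]

lemma dotZ_sub_single_right (x : Fin d → ℝ) (u : Fin d → ℤ) (j : Fin d) :
    dotZ d x (u - Pi.single j 1) = dotZ d x u - x j := by
  simp [dotZ, mul_sub, Finset.sum_sub_distrib, Pi.single_apply]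

lemma dotZ_const_right (x : Fin d → ℝ) (c : ℤ) : dotZ d x (fun _ => c) = c * ∑ i, x i := by
  rw [dotZ, ← Finset.sum_mul, mul_comm]

lemma isICPA_of_concaveOn {Box : Set (Fin d → ℝ)} {f : (Fin d → ℝ) → ℝ}
    (hf : ConcaveOn ℝ Box f) (S : Finset ((Fin d → ℤ) × ℤ))
    (hS : ∀ p ∈ S, (latticeEmbed d p).1 ∈ Box ∧ (latticeEmbed d p).2 ≤ f (latticeEmbed d p).1)
    (hgraph : ∀ x ∈ Box, (x, f x) ∈ convexHull ℝ (latticeEmbed d '' S)) :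
    IsICPA d Box f := by
  have hypo : convexHull ℝ (latticeEmbed d '' S) ⊆ {p | p.1 ∈ Box ∧ p.2 ≤ f p.1} :=
    convexHull_min (Set.image_subset_iff.2 hS) hf.convex_hypograph
  refine ⟨S, ?_, fun x hx => ⟨hgraph x hx, fun t ht => (hypo ht).2⟩⟩
  refine Set.Subset.antisymm ?_ fun x hx => ⟨_, hgraph x hx, rfl⟩
  rintro _ ⟨p, hp, rfl⟩
  exact (hypo hp).1

lemma atHeightOne_of_forall_exists {B : Set (Fin d → ℝ)} {f : (Fin d → ℝ) → ℝ}
    (h : ∀ x ∈ B, ∃ u : Fin d → ℤ, dotZ d x u + f x = 1 ∧ ∀ y ∈ B, dotZ d y u + f y ≤ 1) :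
    AtHeightOne d B f := by
  intro x hx
  obtain ⟨u, hxu, hyu⟩ := h x hx
  refine ⟨u, 1, ?_, fun y hy => ?_⟩
  · simp [hxu]
  · simpa [hxu] using hyu y hy

lemma IsIntegralAffineOn.apply_add_apply_neg {B : Set (Fin d → ℝ)} {f : (Fin d → ℝ) → ℝ}
    (hf : IsIntegralAffineOn d B f) {x : Fin d → ℝ} (hx : x ∈ B) (hnx : -x ∈ B) (h0 : 0 ∈ B) :
    f x + f (-x) = 2 * f 0 := by
  obtain ⟨u, c, hu⟩ := hf
  rw [hu x hx, hu (-x) hnx, hu 0 h0, dotZ_neg_left, dotZ_zero_left]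
  ring

end General

section CrossPolytope

variable {d : ℕ}

lemma norm_toLp_one (x : Fin d → ℝ) : ‖WithLp.toLp 1 x‖ = ∑ i, |x i| := by
  simp [PiLp.norm_eq_of_L1]

/-- The origin (`none`) and the vertices `±eᵢ` (`some (i, true)`, `some (i, false)`). -/
def crossVertex : Option (Fin d × Bool) → Fin d → ℤ
  | none => 0
  | some (i, true) => Pi.single i 1
  | some (i, false) => -Pi.single i 1

/-- Barycentric coordinates of `x` with respect to `crossVertex`. -/
def crossWeight (x : Fin d → ℝ) : Option (Fin d × Bool) → ℝ
  | none => 1 - ∑ i, |x i|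
  | some (i, true) => max (x i) 0
  | some (i, false) => max (-x i) 0

lemma crossWeight_nonneg {x : Fin d → ℝ} (hx : ∑ i, |x i| ≤ 1) (o : Option (Fin d × Bool)) :
    0 ≤ crossWeight x o := by
  rcases o with _ | ⟨i, _ | _⟩
  · exact sub_nonneg.2 hx
  · exact le_max_right _ _
  · exact le_max_right _ _

lemma sum_crossWeight (x : Fin d → ℝ) : ∑ o, crossWeight x o = 1 := by
  have h (i : Fin d) : ∑ b, crossWeight x (some (i, b)) = |x i| := by
    rcases le_total 0 (x i) with hi | hi <;>
      simp [crossWeight, hi, abs_of_nonneg, abs_of_nonpos, add_comm]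
  rw [Fintype.sum_option, Fintype.sum_prod_type, Finset.sum_congr rfl fun i _ => h i]
  simp [crossWeight]

lemma sum_crossWeight_smul_crossVertex (x : Fin d → ℝ) :
    ∑ o, crossWeight x o • (Int.cast ∘ crossVertex o : Fin d → ℝ) = x := by
  ext k
  have h (i : Fin d) : ∑ b, crossWeight x (some (i, b)) * ((crossVertex (some (i, b)) k : ℤ) : ℝ)
      = if k = i then x i else 0 := by
    rcases le_total 0 (x i) with hi | hi <;> by_cases hk : k = i <;>
      simp [crossWeight, crossVertex, hi, hk]
  simp only [Finset.sum_apply, Pi.smul_apply, Function.comp_apply, smul_eq_mul]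
  rw [Fintype.sum_option, Fintype.sum_prod_type, Finset.sum_congr rfl fun i _ => h i]
  simp [crossVertex]

lemma crossVertex_mem_crossPolytope (hd : 0 < d) (o : Option (Fin d × Bool)) :
    (Int.cast ∘ crossVertex o : Fin d → ℝ) ∈ crossPolytope d := by
  rcases o with _ | ⟨i, _ | _⟩
  · let e : Fin d → ℝ := Pi.single ⟨0, hd⟩ 1
    have hmid : (0 : Fin d → ℝ) ∈ segment ℝ e (-e) :=
      ⟨1 / 2, 1 / 2, by norm_num, by norm_num, by norm_num, by rw [smul_neg]; abel⟩
    have h0 : (Int.cast ∘ crossVertex none : Fin d → ℝ) = 0 := by ext; simp [crossVertex]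
    rw [h0]
    exact segment_subset_convexHull (s := {x | ∃ j, x = Pi.single j 1 ∨ x = -Pi.single j 1})
      ⟨_, .inl rfl⟩ ⟨_, .inr rfl⟩ hmid
  · refine subset_convexHull ℝ _ ⟨i, .inr ?_⟩
    ext k; simp [crossVertex, Pi.single_apply]
  · refine subset_convexHull ℝ _ ⟨i, .inl ?_⟩
    ext k; simp [crossVertex, Pi.single_apply]

lemma crossPolytope_eq_preimage_closedBall (hd : 0 < d) :
    crossPolytope d = WithLp.toLp 1 ⁻¹' Metric.closedBall (0 : PiLp 1 fun _ : Fin d => ℝ) 1 := by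
  refine Set.Subset.antisymm (convexHull_min ?_ ?_) fun x hx => ?_
  · rintro _ ⟨j, rfl | rfl⟩ <;> simp
  · exact (convex_closedBall _ _).linear_preimage
      (WithLp.linearEquiv 1 ℝ (Fin d → ℝ)).symm.toLinearMap
  · rw [Set.mem_preimage, mem_closedBall_zero_iff, norm_toLp_one] at hx
    rw [← sum_crossWeight_smul_crossVertex x]
    exact (convex_convexHull ℝ _).sum_mem (fun o _ => crossWeight_nonneg hx o)
      (sum_crossWeight x) fun o _ => crossVertex_mem_crossPolytope hd o

lemma crossPolytope_eq (hd : 0 < d) : crossPolytope d = {x | ∑ i, |x i| ≤ 1} := by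
  ext x
  simp [crossPolytope_eq_preimage_closedBall hd, norm_toLp_one]

lemma interior_crossPolytope (hd : 0 < d) :
    interior (crossPolytope d) = {x | ∑ i, |x i| < 1} := by
  have h : WithLp.toLp 1 ⁻¹' interior (Metric.closedBall 0 1) =
      interior (WithLp.toLp 1 ⁻¹' Metric.closedBall (0 : PiLp 1 fun _ : Fin d => ℝ) 1) :=
    (PiLp.homeomorph 1 fun _ : Fin d => ℝ).symm.preimage_interior _
  rw [crossPolytope_eq_preimage_closedBall hd, ← h, interior_closedBall 0 one_ne_zero]
  ext x
  simp [norm_toLp_one]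

lemma frontier_crossPolytope (hd : 0 < d) :
    frontier (crossPolytope d) = {x | ∑ i, |x i| = 1} := by
  have h : WithLp.toLp 1 ⁻¹' frontier (Metric.closedBall 0 1) =
      frontier (WithLp.toLp 1 ⁻¹' Metric.closedBall (0 : PiLp 1 fun _ : Fin d => ℝ) 1) :=
    (PiLp.homeomorph 1 fun _ : Fin d => ℝ).symm.preimage_frontier _
  rw [crossPolytope_eq_preimage_closedBall hd, ← h, frontier_closedBall 0 one_ne_zero]
  ext x
  simp [norm_toLp_one]

end CrossPolytope

section CrossFun

variable {d : ℕ}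

def crossFun (j : Fin d) (u : Fin d → ℤ) (x : Fin d → ℝ) : ℝ := min 1 (x j + 1) + dotZ d x u

lemma concaveOn_crossFun (j : Fin d) (u : Fin d → ℤ) :
    ConcaveOn ℝ Set.univ (crossFun j u) := by
  have hcoord : ConcaveOn ℝ Set.univ fun x : Fin d → ℝ => x j + 1 :=
    ((LinearMap.proj j).concaveOn convex_univ).add (concaveOn_const 1 convex_univ)
  exact ((concaveOn_const 1 convex_univ).inf hcoord).add ((dotZLinear d u).concaveOn convex_univ)

lemma crossFun_eq_sum_crossWeight (j : Fin d) (u : Fin d → ℤ) (x : Fin d → ℝ) :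
    crossFun j u x = ∑ o, crossWeight x o * crossFun j u (Int.cast ∘ crossVertex o) := by
  have hmin (o : Option (Fin d × Bool)) :
      min 1 ((Int.cast ∘ crossVertex o : Fin d → ℝ) j + 1) =
        1 - if o = some (j, false) then 1 else 0 := by
    rcases o with _ | ⟨i, _ | _⟩
    · simp [crossVertex]
    all_goals by_cases hij : j = i <;> simp [crossVertex, hij, eq_comm]
  have hlin : ∑ o, crossWeight x o * dotZ d (Int.cast ∘ crossVertex o) u = dotZ d x u := by
    have h := congrArg (dotZLinear d u) (sum_crossWeight_smul_crossVertex x)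
    simpa only [map_sum, map_smul, dotZLinear_apply, smul_eq_mul] using h
  simp only [crossFun, mul_add, Finset.sum_add_distrib, hlin, hmin, mul_sub, mul_one, mul_ite,
    mul_zero, Finset.sum_sub_distrib, sum_crossWeight, Finset.sum_ite_eq', Finset.mem_univ,
    if_true]
  change _ = 1 - max (-x j) 0 + _
  rcases le_total 0 (x j) with h | h
  · rw [min_eq_left (by linarith), max_eq_right (by linarith)]; ring
  · rw [min_eq_right (by linarith), max_eq_left (by linarith)]; ring

lemma latticeEmbed_graph_crossFun (j : Fin d) (u : Fin d → ℤ) (v : Fin d → ℤ) :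
    latticeEmbed d (v, min 1 (v j + 1) + ∑ i, v i * u i) =
      (Int.cast ∘ v, crossFun j u (Int.cast ∘ v)) :=
  Prod.ext rfl (by simp [latticeEmbed, crossFun, dotZ])

lemma isICPA_crossFun (hd : 0 < d) (j : Fin d) (u : Fin d → ℤ) :
    IsICPA d (crossPolytope d) (crossFun j u) := by
  let lift (o : Option (Fin d × Bool)) : (Fin d → ℤ) × ℤ :=
    (crossVertex o, min 1 (crossVertex o j + 1) + ∑ i, crossVertex o i * u i)
  refine isICPA_of_concaveOn ((concaveOn_crossFun j u).subset (Set.subset_univ _)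
    (convex_convexHull ℝ _)) (Finset.univ.image lift) ?_ fun x hx => ?_
  · simp only [Finset.mem_image, Finset.mem_univ, true_and]
    rintro _ ⟨o, rfl⟩
    rw [latticeEmbed_graph_crossFun]
    exact ⟨crossVertex_mem_crossPolytope hd o, le_rfl⟩
  · rw [crossPolytope_eq hd] at hx
    have hgraph : (x, crossFun j u x) = ∑ o, crossWeight x o • latticeEmbed d (lift o) := by
      simp only [lift, latticeEmbed_graph_crossFun]
      refine Prod.ext ?_ ?_
      · simp only [Prod.fst_sum, Prod.smul_fst, sum_crossWeight_smul_crossVertex]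
      · simp only [Prod.snd_sum, Prod.smul_snd, smul_eq_mul, crossFun_eq_sum_crossWeight j u x]
    rw [hgraph]
    exact (convex_convexHull ℝ _).sum_mem (fun o _ => crossWeight_nonneg hx o)
      (sum_crossWeight x) fun o _ => subset_convexHull ℝ _ ⟨lift o, by simp, rfl⟩

lemma atHeightOne_crossFun (B : Set (Fin d → ℝ)) (j : Fin d) (u : Fin d → ℤ) :
    AtHeightOne d B (crossFun j u) := by
  refine atHeightOne_of_forall_exists fun x _ => ?_
  rcases le_total 0 (x j) with h | h
  · refine ⟨-u, ?_, fun y _ => ?_⟩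
    · simp [crossFun, dotZ_neg_right, min_eq_left (by linarith : (1 : ℝ) ≤ x j + 1)]
    · simp [crossFun, dotZ_neg_right]
  · refine ⟨-u - Pi.single j 1, ?_, fun y _ => ?_⟩
    · simp only [crossFun, dotZ_sub_single_right, dotZ_neg_right,
        min_eq_right (by linarith : x j + 1 ≤ 1)]
      ring
    · simp only [crossFun, dotZ_sub_single_right, dotZ_neg_right]
      linarith [min_le_right (1 : ℝ) (y j + 1)]

lemma not_isIntegralAffineOn_crossFun (hd : 0 < d) (j : Fin d) (u : Fin d → ℤ) :
    ¬ IsIntegralAffineOn d (crossPolytope d) (crossFun j u) := by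
  intro h
  have hmem (x : Fin d → ℝ) (hx : ∑ i, |x i| ≤ 1) : x ∈ crossPolytope d := by
    rwa [crossPolytope_eq hd]
  have hsingle : ∑ i, |(Pi.single j 1 : Fin d → ℝ) i| ≤ 1 := by
    simp [Pi.single_apply, apply_ite]
  have := h.apply_add_apply_neg (hmem _ hsingle) (hmem _ (by simpa using hsingle))
    (hmem _ (by simp))
  simp [crossFun, dotZ_single_left, dotZ_neg_left, dotZ_zero_left] at this

end CrossFun

lemma Fin.sum_modNat {M : Type*} [AddCommMonoid M] {m n : ℕ} (g : Fin n → M) :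
    ∑ i : Fin (m * n), g i.modNat = m • ∑ j, g j := by
  have h (p : Fin m × Fin n) : (finProdFinEquiv p).modNat = p.2 :=
    congrArg Prod.snd (finProdFinEquiv.symm_apply_apply p)
  rw [← finProdFinEquiv.sum_comp, Fintype.sum_prod_type]
  simp [h]

/-- The paper's family up to reindexing: `fᵢ` uses the coordinate `i mod d`, and the shear
`x ↦ -2 ∑ₖ xₖ` is put on `f₀`. -/
def fanoFamily (d : ℕ) (i : Fin (4 * d)) : (Fin d → ℝ) → ℝ :=
  crossFun i.modNat (if (i : ℕ) = 0 then fun _ => -2 else 0)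

lemma sum_fanoFamily {d : ℕ} (hd : 0 < d) (x : Fin d → ℝ) :
    ∑ i, fanoFamily d i x = 4 * d - 2 * ∑ k, |x k| := by
  have hshear : ∑ i : Fin (4 * d), dotZ d x (if (i : ℕ) = 0 then fun _ => -2 else 0) =
      ∑ k, -2 * x k := by
    rw [Finset.sum_eq_single (⟨0, by omega⟩ : Fin (4 * d))
      (fun i _ hi => by rw [if_neg fun h => hi (Fin.ext h)]; simp [dotZ]) (by simp)]
    simp [dotZ_const_right, Finset.mul_sum]
  have hcoord (t : ℝ) : 4 * min 1 (t + 1) + -2 * t = 4 - 2 * |t| := by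
    rcases le_total 0 t with h | h
    · rw [min_eq_left (by linarith), abs_of_nonneg h]; ring
    · rw [min_eq_right (by linarith), abs_of_nonpos h]; ring
  calc ∑ i, fanoFamily d i x
      = ∑ i : Fin (4 * d), min 1 (x i.modNat + 1) +
          ∑ i : Fin (4 * d), dotZ d x (if (i : ℕ) = 0 then fun _ => -2 else 0) :=
        Finset.sum_add_distrib
    _ = ∑ k, (4 * min 1 (x k + 1) + -2 * x k) := by
        rw [Fin.sum_modNat fun k => min 1 (x k + 1), hshear, Finset.sum_add_distrib, nsmul_eq_mul,
          Finset.mul_sum]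
        norm_num
    _ = 4 * d - 2 * ∑ k, |x k| := by
        rw [Finset.sum_congr rfl fun k _ => hcoord (x k), Finset.sum_sub_distrib, ← Finset.mul_sum]
        simp [mul_comm]

/-- On the `d`-dimensional cross polytope there exists normalized Fano data consisting of
exactly `4d` functions; in particular, the bound `n ≤ c(Box) = 4d` is attained. -/
theorem cross_polytope_attains_bound (d : ℕ) (hd : 0 < d) :
    ∃ f : Fin (4 * d) → (Fin d → ℝ) → ℝ,
      NormalizedFanoData d (4 * d) (crossPolytope d) f := by
  refine ⟨fanoFamily d, fun i => isICPA_crossFun hd _ _, fun i => atHeightOne_crossFun _ _ _,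
    fun i => ?_, fun i => not_isIntegralAffineOn_crossFun hd _ _, fun x hx => ?_, fun x hx => ?_,
    fun x hx => .inl ?_⟩
  · simp [fanoFamily, crossFun, dotZ_zero_left]
  all_goals
    rw [sum_fanoFamily hd]
    push_cast
  · rw [crossPolytope_eq hd] at hx
    linarith [hx.out]
  · rw [interior_crossPolytope hd] at hx
    linarith [hx.out]
  · rw [frontier_crossPolytope hd] at hx
    rw [hx.out]
    ring

end
end

section
/- Let d be a positive integer, let Box ⊆ ℝ^d be a full-dimensional lattice polytope with 0 in its interior, let v ∈ ℤ^d be a primitive vector, and let f₁,…,fₙ be normalized Fano data on Box. Then the number of indices i ∈ {1,…,n} such that fᵢ(0) < 1 (i.e., fᵢ is non-integral) or the restriction of fᵢ to Box ∩ ℝ·v is not affine is at most 4/α_v. -/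
open scoped BigOperators

noncomputable section

/-!
Restrict each `fᵢ` to the line `t ↦ t v`, where `±α v ∈ Box` for `α = α_v`. The Fano inequality
at `±α v` gives `∑ᵢ (fᵢ(α v) + fᵢ(-α v)) ≥ 2n - 4`, while concavity gives
`fᵢ(α v) + fᵢ(-α v) ≤ 2 fᵢ(0)`, and height one at `0` gives `fᵢ(0) = 1/|m|`, so each summand is at
most `2`, and at most `1 ≤ 2 - α` when `fᵢ` is non-integral. If `fᵢ(0) = 1` but `fᵢ` is not affine
on the line, height one at an interior point of the segment forces the supporting line there to
be `t ↦ 1 - s t` with `s ∈ ℤ`. Two such lines with different slopes exist, so their slopes differ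
by at least one and the summand is at most `2 - α`. Summing, `α · #{bad i} ≤ 4`.
-/

open Set Filter Topology

section Convexity

variable {E : Type*} [AddCommGroup E] [Module ℝ E] [TopologicalSpace E]
  [IsTopologicalAddGroup E] [ContinuousSMul ℝ E] {s : Set E} {x y : E}

theorem exists_mem_openSegment_of_mem_interior (hx : x ∈ interior s) (y : E) :
    ∃ z ∈ s, x ∈ openSegment ℝ y z := by
  have hpath : Tendsto (fun c : ℝ => x + c • (x - y)) (𝓝 0) (𝓝 x) := by
    have hcont : Continuous fun c : ℝ => x + c • (x - y) := by fun_prop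
    simpa using hcont.tendsto 0
  have hnear : ∀ᶠ c in 𝓝[>] (0 : ℝ), x + c • (x - y) ∈ s ∧ 0 < c :=
    ((hpath.eventually (mem_interior_iff_mem_nhds.1 hx)).filter_mono nhdsWithin_le_nhds).and
      self_mem_nhdsWithin
  obtain ⟨c, hcs, hc⟩ := hnear.exists
  refine ⟨_, hcs, c / (1 + c), 1 / (1 + c), by positivity, by positivity, ?_, ?_⟩
  · field_simp; ring
  · have : (1 + c) ≠ 0 := by positivity
    match_scalars <;> field_simp
    ring

theorem ConvexOn.eq_of_isMaxOn_of_mem_interior {φ : E → ℝ} (hφ : ConvexOn ℝ s φ)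
    (hmax : IsMaxOn φ s x) (hx : x ∈ interior s) (hy : y ∈ s) : φ y = φ x := by
  obtain ⟨z, hz, hxz⟩ := exists_mem_openSegment_of_mem_interior hx y
  exact le_antisymm (hmax hy) (hφ.le_left_of_right_le hy hz hxz (hmax hz))

theorem Convex.exists_mem_interior_lt {g L : E → ℝ} (hs : Convex ℝ s)
    (hs' : (interior s).Nonempty) (hg : UpperSemicontinuousOn g s) (hL : Continuous L)
    (hx : x ∈ s) (hlt : g x < L x) : ∃ y ∈ interior s, g y < L y := by
  have hgL : ∀ᶠ y in 𝓝[s] x, g y < L y := by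
    filter_upwards [hg x hx _ (left_lt_add_div_two.2 hlt),
      nhdsWithin_le_nhds (hL.continuousAt.eventually (lt_mem_nhds (add_div_two_lt_right.2 hlt)))]
      with y h1 h2 using h1.trans h2
  have : (𝓝[interior s] x).NeBot := mem_closure_iff_nhdsWithin_neBot.1 <| by
    rw [hs.closure_interior_eq_closure_of_nonempty_interior hs']
    exact subset_closure hx
  exact ((hgL.filter_mono (nhdsWithin_mono _ interior_subset)).and
    self_mem_nhdsWithin).exists.imp fun y h => ⟨h.2, h.1⟩

end Convexity

section Line

def HeightOneOn (I : Set ℝ) (g : ℝ → ℝ) : Prop :=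
  ∀ t ∈ I, ∃ s m : ℤ, |(s : ℝ) * t + m * g t| = 1 ∧
    ∀ t' ∈ I, (s : ℝ) * t' + m * g t' ≤ s * t + m * g t

def IsAffineOn (I : Set ℝ) (g : ℝ → ℝ) : Prop :=
  ∃ a b : ℝ, ∀ t ∈ I, g t = a * t + b

variable {I : Set ℝ} {g : ℝ → ℝ}

theorem HeightOneOn.eq_one_or_le_half (hh : HeightOneOn I g) (h0 : 0 ∈ I) (hpos : 0 < g 0) :
    g 0 = 1 ∨ g 0 ≤ 1 / 2 := by
  obtain ⟨_, m, habs, -⟩ := hh 0 h0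
  rw [mul_zero, zero_add, abs_mul, abs_of_pos hpos, ← Int.cast_abs] at habs
  rcases (by have := abs_nonneg m; omega : |m| = 0 ∨ |m| = 1 ∨ 2 ≤ |m|) with hm | hm | hm
  · simp [hm] at habs
  · exact Or.inl (by simpa [hm] using habs)
  · right
    have : (2 : ℝ) ≤ (|m| : ℤ) := by exact_mod_cast hm
    nlinarith

/-- At an interior point, the height-one functional of a non-affine concave `g` with `g 0 = 1`
must be `t ↦ s t + g t` with value `1`: for `m ≤ 0` it would be a convex function with an
interior maximum, hence constant, making `g` affine. -/
theorem HeightOneOn.exists_integral_support (hg : ConcaveOn ℝ I g) (hh : HeightOneOn I g)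
    (hna : ¬ IsAffineOn I g) (h0 : 0 ∈ I) (hg0 : g 0 = 1) {t : ℝ} (ht : t ∈ interior I) :
    ∃ s : ℤ, (∀ x ∈ I, g x ≤ 1 - s * x) ∧ g t = 1 - s * t := by
  obtain ⟨s, m, habs, hmax⟩ := hh t (interior_subset ht)
  have hm_le : (m : ℝ) ≤ s * t + m * g t := by simpa [hg0] using hmax 0 h0
  have hm_pos : 0 < m := by
    by_contra! hm
    have hconv : ConvexOn ℝ I fun x => (s : ℝ) * x + m * g x :=
      (((LinearMap.mul ℝ ℝ s).convexOn hg.1).add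
        (hg.smul (neg_nonneg.2 (Int.cast_nonpos.2 hm))).neg).congr fun x _ => by
          simp only [Pi.add_apply, Pi.neg_apply, LinearMap.mul_apply', smul_eq_mul]; ring
    have hconst : ∀ x ∈ I, (s : ℝ) * x + m * g x = s * t + m * g t := fun x hx =>
      hconv.eq_of_isMaxOn_of_mem_interior (isMaxOn_iff.2 hmax) ht hx
    have hm1 : (m : ℝ) = -1 := by
      have h := hconst 0 h0
      rw [mul_zero, zero_add, hg0, mul_one] at h
      rw [← h] at habs
      have : (m : ℝ) ≤ 0 := by exact_mod_cast hm
      rcases abs_cases (m : ℝ) with ⟨h1, -⟩ | ⟨h1, -⟩ <;> linarith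
    rw [hm1] at hconst
    exact hna ⟨s, g t - s * t, fun x hx => by linarith [hconst x hx]⟩
  have hm1 : (1 : ℝ) ≤ m := by exact_mod_cast hm_pos
  have hval : (s : ℝ) * t + m * g t ≤ 1 := (le_abs_self _).trans habs.le
  have hm_eq : (m : ℝ) = 1 := by linarith
  rw [hm_eq] at hmax hval hm_le
  exact ⟨s, fun x hx => by linarith [hmax x hx], by linarith⟩

theorem add_neg_le_two_sub_of_supports {a b : ℤ} (hab : a < b) {α : ℝ} (hα : 0 ≤ α)
    (ha : g (-α) ≤ 1 - a * -α) (hb : g α ≤ 1 - b * α) : g α + g (-α) ≤ 2 - α := by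
  have : (a : ℝ) + 1 ≤ b := by exact_mod_cast hab
  nlinarith

/-- Two distinct integral supporting lines through `(0, 1)` differ in slope by at least one;
the second one comes from a point where `g` drops strictly below the first, which by upper
semicontinuity can be taken in the interior. -/
theorem add_neg_le_two_sub_of_not_isAffineOn (hg : ConcaveOn ℝ I g) (hh : HeightOneOn I g)
    (husc : UpperSemicontinuousOn g I) (hna : ¬ IsAffineOn I g) (h0 : 0 ∈ interior I)
    (hg0 : g 0 = 1) {α : ℝ} (hα : 0 ≤ α) (hαI : α ∈ I) (hnαI : -α ∈ I) :
    g α + g (-α) ≤ 2 - α := by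
  obtain ⟨s₀, hs₀, -⟩ := hh.exists_integral_support hg hna (interior_subset h0) hg0 h0
  obtain ⟨T, hT, hlt⟩ : ∃ T ∈ I, g T < 1 - s₀ * T := by
    by_contra! h
    exact hna ⟨-s₀, 1, fun t ht => by linarith [hs₀ t ht, h t ht]⟩
  obtain ⟨t₁, ht₁, hlt₁⟩ := hg.1.exists_mem_interior_lt (L := fun t => 1 - s₀ * t) ⟨0, h0⟩ husc
    (by fun_prop) hT hlt
  obtain ⟨s₁, hs₁, heq₁⟩ := hh.exists_integral_support hg hna (interior_subset h0) hg0 ht₁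
  rcases lt_or_gt_of_ne (show s₀ ≠ s₁ by rintro rfl; linarith) with h | h
  · exact add_neg_le_two_sub_of_supports h hα (hs₀ _ hnαI) (hs₁ _ hαI)
  · exact add_neg_le_two_sub_of_supports h hα (hs₁ _ hnαI) (hs₀ _ hαI)

theorem ConcaveOn.add_neg_le_two_mul (hg : ConcaveOn ℝ I g) {α : ℝ} (hαI : α ∈ I)
    (hnαI : -α ∈ I) : g α + g (-α) ≤ 2 * g 0 := by
  have hmid := hg.2 hαI hnαI (by norm_num : (0 : ℝ) ≤ 1 / 2) (by norm_num : (0 : ℝ) ≤ 1 / 2)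
    (by norm_num)
  simp only [smul_eq_mul, ← mul_add, add_neg_cancel] at hmid
  linarith

theorem add_neg_le_two (hg : ConcaveOn ℝ I g) (hh : HeightOneOn I g) (h0 : 0 ∈ I)
    (hpos : 0 < g 0) {α : ℝ} (hαI : α ∈ I) (hnαI : -α ∈ I) : g α + g (-α) ≤ 2 := by
  have := hg.add_neg_le_two_mul hαI hnαI
  rcases hh.eq_one_or_le_half h0 hpos with hg0 | hg0 <;> linarith

theorem add_neg_le_two_sub_of_lt_one_or_not_isAffineOn (hg : ConcaveOn ℝ I g)
    (hh : HeightOneOn I g) (husc : UpperSemicontinuousOn g I) (h0 : 0 ∈ interior I)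
    (hpos : 0 < g 0) {α : ℝ} (hα : 0 ≤ α) (hα1 : α ≤ 1) (hαI : α ∈ I) (hnαI : -α ∈ I)
    (hbad : g 0 < 1 ∨ ¬ IsAffineOn I g) : g α + g (-α) ≤ 2 - α := by
  rcases hh.eq_one_or_le_half (interior_subset h0) hpos with hg0 | hg0
  · exact add_neg_le_two_sub_of_not_isAffineOn hg hh husc (hbad.resolve_left hg0.not_lt) h0 hg0
      hα hαI hnαI
  · linarith [hg.add_neg_le_two_mul hαI hnαI]

theorem min_one_sSup_mem_of_isCompact (hI : IsCompact I) (hconv : Convex ℝ I)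
    (h0 : 0 ∈ interior I) :
    0 < min 1 (sSup {a | 0 ≤ a ∧ a ∈ I ∧ -a ∈ I}) ∧
      min 1 (sSup {a | 0 ≤ a ∧ a ∈ I ∧ -a ∈ I}) ∈ I ∧
      -min 1 (sSup {a | 0 ≤ a ∧ a ∈ I ∧ -a ∈ I}) ∈ I := by
  set J := {a | 0 ≤ a ∧ a ∈ I ∧ -a ∈ I}
  have hJc : IsClosed J :=
    isClosed_Ici.inter (hI.isClosed.inter (hI.isClosed.preimage continuous_neg))
  have hJb : BddAbove J := hI.bddAbove.mono fun a ha => ha.2.1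
  have hsup : sSup J ∈ J :=
    hJc.csSup_mem ⟨0, le_rfl, interior_subset h0, by simpa using interior_subset h0⟩ hJb
  obtain ⟨ε, hε, hball⟩ := Metric.mem_nhds_iff.1 (mem_interior_iff_mem_nhds.1 h0)
  have hεJ : ε / 2 ∈ J := by
    refine ⟨by positivity, hball ?_, hball ?_⟩ <;>
      simp [abs_of_pos hε, half_lt_self hε]
  have hpos : 0 < sSup J := (half_pos hε).trans_le (le_csSup hJb hεJ)
  refine ⟨lt_min one_pos hpos, hconv.ordConnected.out (interior_subset h0) hsup.2.1
    ⟨(lt_min one_pos hpos).le, min_le_right _ _⟩, hconv.ordConnected.out hsup.2.2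
    (interior_subset h0) ⟨neg_le_neg (min_le_right _ _), neg_nonpos.2 (lt_min one_pos hpos).le⟩⟩

end Line

section Polytope

variable {d : ℕ} {Box : Set (Fin d → ℝ)} {f : (Fin d → ℝ) → ℝ}

theorem IsLatticePolytope.isCompact (h : IsLatticePolytope d Box) : IsCompact Box := by
  obtain ⟨S, rfl⟩ := h
  exact (S.finite_toSet.image _).isCompact_convexHull (𝕜 := ℝ)

theorem IsLatticePolytope.convex (h : IsLatticePolytope d Box) : Convex ℝ Box := by
  obtain ⟨S, rfl⟩ := h
  exact convex_convexHull ℝ _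

theorem IsICPA.concaveOn (hf : IsICPA d Box f) : ConcaveOn ℝ Box f := by
  obtain ⟨S, hproj, hmax⟩ := hf
  have hC := convex_convexHull ℝ (latticeEmbed d '' (S : Set ((Fin d → ℤ) × ℤ)))
  have hBox : Convex ℝ Box := hproj ▸ hC.linear_image (LinearMap.fst ℝ _ ℝ)
  exact ⟨hBox, fun x hx y hy a b ha hb hab =>
    (hmax _ (hBox hx hy ha hb hab)).2 (hC (hmax x hx).1 (hmax y hy).1 ha hb hab)⟩

/-- The points of the hull at height `≥ y` form a compact set; its projection is closed and
misses `x` when `f x < y`. -/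
theorem IsICPA.upperSemicontinuousOn (hf : IsICPA d Box f) : UpperSemicontinuousOn f Box := by
  obtain ⟨S, hproj, hmax⟩ := hf
  set C := convexHull ℝ (latticeEmbed d '' (S : Set ((Fin d → ℤ) × ℤ)))
  intro x hx y hxy
  have hK : IsCompact (C ∩ {p | y ≤ p.2}) :=
    ((S.finite_toSet.image _).isCompact_convexHull (𝕜 := ℝ)).inter_right
      (isClosed_le continuous_const continuous_snd)
  have hxK : x ∉ Prod.fst '' (C ∩ {p | y ≤ p.2}) := by
    rintro ⟨⟨x', t⟩, ⟨hC, hyt⟩, rfl⟩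
    exact (hxy.trans_le hyt).not_ge ((hmax _ hx).2 hC)
  have hU := (hK.image continuous_fst).isClosed.isOpen_compl.mem_nhds hxK
  filter_upwards [nhdsWithin_le_nhds hU, self_mem_nhdsWithin] with x' hx'K hx'B
  by_contra! h
  exact hx'K ⟨(x', f x'), ⟨(hmax _ hx'B).1, h⟩, rfl⟩

theorem IsPrimitive.ne_zero {v : Fin d → ℤ} (hv : IsPrimitive d v) : v ≠ 0 := by
  rintro rfl
  have : Finset.univ.gcd (0 : Fin d → ℤ) = 0 := Finset.gcd_eq_zero_iff.2 fun _ _ => rfl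
  simp [IsPrimitive, this] at hv

def lineThrough (v : Fin d → ℤ) : ℝ →ₗ[ℝ] Fin d → ℝ :=
  LinearMap.toSpanSingleton ℝ _ fun i => (v i : ℝ)

theorem lineThrough_apply (v : Fin d → ℤ) (t : ℝ) : lineThrough v t = fun i => t * (v i : ℝ) :=
  rfl

theorem dotZ_lineThrough (v u : Fin d → ℤ) (t : ℝ) :
    dotZ d (lineThrough v t) u = ((∑ i, v i * u i : ℤ) : ℝ) * t := by
  simp only [dotZ, lineThrough_apply, Int.cast_sum, Int.cast_mul, Finset.sum_mul]
  exact Finset.sum_congr rfl fun i _ => by ring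

theorem AtHeightOne.heightOneOn_comp_lineThrough (hf : AtHeightOne d Box f) (v : Fin d → ℤ) :
    HeightOneOn (lineThrough v ⁻¹' Box) (f ∘ lineThrough v) := by
  intro t ht
  obtain ⟨u, m, habs, hmax⟩ := hf _ ht
  exact ⟨∑ i, v i * u i, m, by simpa only [dotZ_lineThrough, Function.comp_apply] using habs,
    fun t' ht' => by simpa only [dotZ_lineThrough, Function.comp_apply] using hmax _ ht'⟩

theorem zero_mem_interior_preimage_lineThrough (h0 : 0 ∈ interior Box) (v : Fin d → ℤ) :
    (0 : ℝ) ∈ interior (lineThrough v ⁻¹' Box) :=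
  preimage_interior_subset_interior_preimage (LinearMap.continuous_of_finiteDimensional _)
    (by simpa only [mem_preimage, map_zero] using h0)

theorem alphaV_mem (hB : IsCompact Box) (hconv : Convex ℝ Box) (h0 : 0 ∈ interior Box)
    {v : Fin d → ℤ} (hv : v ≠ 0) :
    0 < alphaV d Box v ∧ lineThrough v (alphaV d Box v) ∈ Box ∧
      lineThrough v (-alphaV d Box v) ∈ Box := by
  have hv' : (fun i => (v i : ℝ)) ≠ 0 := fun h => hv (funext fun i => by
    simpa using congrFun h i)
  have hI : IsCompact (lineThrough v ⁻¹' Box) :=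
    (isClosedEmbedding_smul_left hv').isCompact_preimage hB
  have hα : alphaV d Box v = min 1 (sSup {a | 0 ≤ a ∧ a ∈ lineThrough v ⁻¹' Box ∧
      -a ∈ lineThrough v ⁻¹' Box}) := by
    simp [alphaV, lineThrough_apply, neg_mul]
  rw [hα]
  exact min_one_sSup_mem_of_isCompact hI (hconv.linear_preimage _)
    (zero_mem_interior_preimage_lineThrough h0 v)

theorem IsICPA.add_neg_le_two_sub_ite (hf : IsICPA d Box f) (hh : AtHeightOne d Box f)
    (h0 : 0 ∈ interior Box) (hpos : 0 < f 0) {v : Fin d → ℤ}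
    [Decidable (f 0 < 1 ∨ ¬ AffineOnLine d Box v f)] {α : ℝ} (hα : 0 ≤ α) (hα1 : α ≤ 1)
    (hαB : lineThrough v α ∈ Box) (hnαB : lineThrough v (-α) ∈ Box) :
    f (lineThrough v α) + f (lineThrough v (-α)) ≤
      2 - if f 0 < 1 ∨ ¬ AffineOnLine d Box v f then α else 0 := by
  have hg := hf.concaveOn.comp_linearMap (lineThrough v)
  have hh' := hh.heightOneOn_comp_lineThrough v
  have hg0 : (f ∘ lineThrough v) 0 = f 0 := by simp only [Function.comp_apply, map_zero]
  have h0' := zero_mem_interior_preimage_lineThrough h0 v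
  split_ifs with hbad
  · exact add_neg_le_two_sub_of_lt_one_or_not_isAffineOn hg hh'
      (hf.upperSemicontinuousOn.comp (lineThrough v).continuous_of_finiteDimensional.continuousOn
        (mapsTo_preimage _ _)) h0' (hg0 ▸ hpos) hα hα1 hαB hnαB (hg0 ▸ hbad)
  · simpa using add_neg_le_two hg hh' (interior_subset h0') (hg0 ▸ hpos) hαB hnαB

end Polytope

theorem bound_nonintegral_or_nonlinear_along_line_general
    (d : ℕ) (Box : Set (Fin d → ℝ)) (hlat : IsLatticePolytope d Box)
    (h0 : (0 : Fin d → ℝ) ∈ interior Box)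
    (v : Fin d → ℤ) (hv : IsPrimitive d v)
    (n : ℕ) (f : Fin n → (Fin d → ℝ) → ℝ)
    (hf : NormalizedFanoData d n Box f) :
    (({i : Fin n | f i 0 < 1 ∨ ¬ AffineOnLine d Box v (f i)}.ncard : ℝ)) ≤
      4 / alphaV d Box v := by
  classical
  obtain ⟨hicpa, hh, hpos, -, hge, -, -⟩ := hf
  obtain ⟨hα, hαB, hnαB⟩ := alphaV_mem hlat.isCompact hlat.convex h0 hv.ne_zero
  set α := alphaV d Box v
  set bad := Finset.univ.filter fun i => f i 0 < 1 ∨ ¬ AffineOnLine d Box v (f i)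
  have hsum : 2 * (n : ℝ) - 4 ≤ 2 * n - bad.card * α := calc
    2 * (n : ℝ) - 4 ≤ ∑ i, (f i (lineThrough v α) + f i (lineThrough v (-α))) := by
      rw [Finset.sum_add_distrib]; linarith [hge _ hαB, hge _ hnαB]
    _ ≤ ∑ i, (2 - if f i 0 < 1 ∨ ¬ AffineOnLine d Box v (f i) then α else 0) :=
      Finset.sum_le_sum fun i _ => (hicpa i).add_neg_le_two_sub_ite (hh i) h0 (hpos i) hα.le
        (min_le_left _ _) hαB hnαB
    _ = 2 * n - bad.card * α := by
      simp [Finset.sum_sub_distrib, ← Finset.sum_filter, bad, mul_comm]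
  rw [Set.ncard_eq_toFinset_card', Set.toFinset_ofPred, le_div_iff₀ hα]
  linarith

/-- For a primitive `v ∈ ℤ^d`, at most `4/α_v` of the functions of normalized Fano data are
non-integral or non-affine along the line spanned by `v`. -/
theorem bound_nonintegral_or_nonlinear_along_line
    (d : ℕ) (hd : 0 < d) (Box : Set (Fin d → ℝ)) (hlat : IsLatticePolytope d Box)
    (h0 : (0 : Fin d → ℝ) ∈ interior Box)
    (v : Fin d → ℤ) (hv : IsPrimitive d v)
    (n : ℕ) (f : Fin n → (Fin d → ℝ) → ℝ)
    (hf : NormalizedFanoData d n Box f) :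
    (({i : Fin n | f i 0 < 1 ∨ ¬ AffineOnLine d Box v (f i)}.ncard : ℝ)) ≤
      4 / alphaV d Box v :=
  bound_nonintegral_or_nonlinear_along_line_general d Box hlat h0 v hv n f hf

end
end

section
/- Let d be a positive integer, let Box ⊆ ℝ^d be a full-dimensional lattice polytope with 0 in its interior, and let f be an integral concave piecewise-affine function on Box which is at height one and satisfies f(0) = 1. Then f is affine along the segment from the origin to any point of Box: for every v ∈ Box and every t ∈ [0,1], f(t·v) = (1 − t)·f(0) + t·f(v). -/
open scoped BigOperators

noncomputable section

/-! Restricted to a segment, `g τ = f (τ • v)` is concave with `g 0 = 1`. At an interior point `t`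
the height-one supporting hyperplane restricts to `τ a + m g τ ≤ c` with `|c| = 1`, and `τ = 0`
gives `m ≤ c`. For `m > 0` this forces `m = c = 1`: a line through `(0, 1)` and `(t, g t)`
lying above `g`;
`m = 0` is impossible since `t < 1`; and for `m < 0` concavity forces `c = m = -1`, so the line
lies below the concave `g` and touches it at an interior point, hence equals `g`. Either way the
chord from `0` through every interior point majorizes `g`, so all these chords have one slope.
Since `f` is the upper boundary of the closed polytope `conv S`, it is upper semicontinuous,
which extends the identity to `τ = 1`; concavity gives the other inequality there. -/

open Set Filter Topology

theorem ConcaveOn.eq_of_isMinOn_of_mem_Ioo {h : ℝ → ℝ} {a b x : ℝ}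
    (hh : ConcaveOn ℝ (Icc a b) h) (hx : x ∈ Ioo a b) (hmin : IsMinOn h (Icc a b) x) :
    ∀ y ∈ Icc a b, h y = h x := by
  have ha : a ∈ Icc a b := left_mem_Icc.2 (hx.1.trans hx.2).le
  have hb : b ∈ Icc a b := right_mem_Icc.2 (hx.1.trans hx.2).le
  intro y hy
  refine le_antisymm ?_ (hmin hy)
  rcases le_total y x with hyx | hxy
  · exact hh.left_le_of_le_right'' hy hb hyx hx.2 (hmin hb)
  · exact hh.right_le_of_le_left'' ha hy hx.1 hxy (hmin ha)

def ChordFromZeroMajorizes (g : ℝ → ℝ) (t : ℝ) : Prop :=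
  ∃ α : ℝ, g t = g 0 + α * t ∧ ∀ τ ∈ Icc (0 : ℝ) 1, g τ ≤ g 0 + α * τ

theorem chordFromZeroMajorizes_of_supporting {g : ℝ → ℝ} (hg : ConcaveOn ℝ (Icc 0 1) g)
    (hg0 : g 0 = 1) {t a : ℝ} {m : ℤ} (ht : t ∈ Ioo (0 : ℝ) 1)
    (habs : |t * a + m * g t| = 1)
    (hle : ∀ τ ∈ Icc (0 : ℝ) 1, τ * a + m * g τ ≤ t * a + m * g t) :
    ChordFromZeroMajorizes g t := by
  obtain ⟨ht0, ht1⟩ := ht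
  obtain ⟨c, hc⟩ : ∃ c, t * a + m * g t = c := ⟨_, rfl⟩
  rw [hc] at habs hle
  have hI0 : (0 : ℝ) ∈ Icc (0 : ℝ) 1 := left_mem_Icc.2 zero_le_one
  have hI1 : (1 : ℝ) ∈ Icc (0 : ℝ) 1 := right_mem_Icc.2 zero_le_one
  have hm_le : (m : ℝ) ≤ c := by simpa [hg0] using hle 0 hI0
  have h1_le : a + m * g 1 ≤ c := by simpa using hle 1 hI1
  have hc_pm : c = 1 ∨ c = -1 := (abs_eq zero_le_one).1 habs
  rcases lt_trichotomy m 0 with hm | rfl | hm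
  · have hmR : (m : ℝ) < 0 := by exact_mod_cast hm
    have hchord : (1 - t) + t * g 1 ≤ g t := by
      simpa [hg0] using hg.2 hI0 hI1 (sub_nonneg.2 ht1.le) ht0.le (sub_add_cancel 1 t)
    -- concavity between `0` and `1` against the supporting inequality at both ends
    have hc_le : c ≤ m := by
      nlinarith [mul_le_mul_of_nonpos_left hchord hmR.le, mul_le_mul_of_nonneg_left h1_le ht0.le]
    have hc' : c = -1 := hc_pm.resolve_left (by linarith)
    have hm' : (m : ℝ) = -1 := by linarith
    simp only [hm', hc'] at hc hle
    -- the supporting line now lies below the concave `g` and touches it at an interior point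
    have hconc : ConcaveOn ℝ (Icc 0 1) (fun τ => g τ - (1 + a * τ)) :=
      hg.sub ((convexOn_const 1 (convex_Icc 0 1)).add
        ((LinearMap.mulLeft ℝ a).convexOn (convex_Icc 0 1)))
    have hmin : IsMinOn (fun τ => g τ - (1 + a * τ)) (Icc 0 1) t := fun τ hτ => by
      have := hle τ hτ
      change g t - (1 + a * t) ≤ g τ - (1 + a * τ)
      linarith
    refine ⟨a, by rw [hg0]; linarith, fun τ hτ => ?_⟩
    have := hconc.eq_of_isMinOn_of_mem_Ioo ⟨ht0, ht1⟩ hmin τ hτ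
    linarith
  · have hc' : c = 1 := hc_pm.resolve_right (by push_cast at hm_le; linarith)
    simp only [Int.cast_zero, zero_mul, add_zero] at hc h1_le
    nlinarith
  · have hmR : (1 : ℝ) ≤ m := by exact_mod_cast hm
    have hc' : c = 1 := hc_pm.resolve_right (by linarith)
    have hm' : (m : ℝ) = 1 := by linarith
    simp only [hm', hc', one_mul] at hc hle
    exact ⟨-a, by rw [hg0]; linarith, fun τ hτ => by linarith [hle τ hτ]⟩

theorem affineOn_Icc_of_chordFromZeroMajorizes {g : ℝ → ℝ}
    (hchord : ∀ t ∈ Ioo (0 : ℝ) 1, ChordFromZeroMajorizes g t)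
    (husc : ∀ y, Tendsto g (𝓝[<] 1) (𝓝 y) → y ≤ g 1) :
    ∀ t ∈ Icc (0 : ℝ) 1, g t = (1 - t) * g 0 + t * g 1 := by
  obtain ⟨α, hα, hα_le⟩ := hchord (1 / 2) ⟨by norm_num, by norm_num⟩
  -- two majorizing chords from `0` through interior points must have the same slope
  have hline : ∀ t ∈ Ico (0 : ℝ) 1, g t = g 0 + α * t := by
    rintro t ⟨ht0, ht1⟩
    rcases ht0.eq_or_lt with rfl | ht0
    · simp
    obtain ⟨β, hβ, hβ_le⟩ := hchord t ⟨ht0, ht1⟩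
    have h₁ := hα_le t ⟨ht0.le, ht1.le⟩
    have h₂ := hβ_le (1 / 2) ⟨by norm_num, by norm_num⟩
    have : β = α := by nlinarith
    rw [hβ, this]
  have hlim : Tendsto g (𝓝[<] 1) (𝓝 (g 0 + α * 1)) := by
    refine Tendsto.congr' ?_ ((continuous_const.add (continuous_const_mul α)).tendsto' 1 _ rfl
      |>.mono_left nhdsWithin_le_nhds)
    filter_upwards [Ioo_mem_nhdsLT (show (0 : ℝ) < 1 by norm_num)] with τ hτ
    exact (hline τ (Ioo_subset_Ico_self hτ)).symm
  have hg1 : g 1 = g 0 + α := le_antisymm (by simpa using hα_le 1 ⟨zero_le_one, le_rfl⟩)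
    (by simpa using husc _ hlim)
  rintro t ⟨ht0, ht1⟩
  rcases ht1.eq_or_lt with rfl | ht1
  · ring
  rw [hline t ⟨ht0, ht1⟩, hg1]
  ring

theorem dotZ_smul (d : ℕ) (c : ℝ) (x : Fin d → ℝ) (u : Fin d → ℤ) :
    dotZ d (c • x) u = c * dotZ d x u := by
  simp [dotZ, Finset.mul_sum, mul_assoc]

theorem AtHeightOne.exists_supporting_along_ray {d : ℕ} {Box : Set (Fin d → ℝ)}
    {f : (Fin d → ℝ) → ℝ} (hf : AtHeightOne d Box f) {v : Fin d → ℝ} {t : ℝ}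
    (ht : t • v ∈ Box) :
    ∃ (a : ℝ) (m : ℤ), |t * a + m * f (t • v)| = 1 ∧
      ∀ τ : ℝ, τ • v ∈ Box → τ * a + m * f (τ • v) ≤ t * a + m * f (t • v) := by
  obtain ⟨u, m, habs, hle⟩ := hf _ ht
  refine ⟨dotZ d v u, m, by rwa [← dotZ_smul], fun τ hτ => ?_⟩
  simpa only [dotZ_smul] using hle _ hτ

namespace IsICPA

variable {d : ℕ} {Box : Set (Fin d → ℝ)} {f : (Fin d → ℝ) → ℝ}

theorem exists_convex_isClosed_isGreatest (hf : IsICPA d Box f) :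
    ∃ K : Set ((Fin d → ℝ) × ℝ), Convex ℝ K ∧ IsClosed K ∧ Prod.fst '' K = Box ∧
      ∀ x ∈ Box, IsGreatest {t | (x, t) ∈ K} (f x) := by
  obtain ⟨S, hproj, hgr⟩ := hf
  exact ⟨_, convex_convexHull ℝ _,
    ((S.finite_toSet.image _).isCompact_convexHull (𝕜 := ℝ)).isClosed, hproj, hgr⟩

theorem convex (hf : IsICPA d Box f) : Convex ℝ Box := by
  obtain ⟨K, hK, -, hproj, -⟩ := hf.exists_convex_isClosed_isGreatest
  exact hproj ▸ hK.linear_image (LinearMap.fst ℝ _ ℝ)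

theorem concaveOn_s9 (hf : IsICPA d Box f) : ConcaveOn ℝ Box f := by
  obtain ⟨K, hK, -, -, hgr⟩ := hf.exists_convex_isClosed_isGreatest
  refine ⟨hf.convex, fun x hx y hy a b ha hb hab => ?_⟩
  exact (hgr _ (hf.convex hx hy ha hb hab)).2 (hK (hgr x hx).1 (hgr y hy).1 ha hb hab)

theorem le_of_tendsto (hf : IsICPA d Box f) {ι : Type*} {l : Filter ι} [l.NeBot]
    {φ : ι → Fin d → ℝ} {x : Fin d → ℝ} {y : ℝ} (hx : x ∈ Box) (hφ : ∀ᶠ i in l, φ i ∈ Box)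
    (hφx : Tendsto φ l (𝓝 x)) (hfy : Tendsto (f ∘ φ) l (𝓝 y)) : y ≤ f x := by
  obtain ⟨K, -, hKc, -, hgr⟩ := hf.exists_convex_isClosed_isGreatest
  exact (hgr x hx).2 <| hKc.mem_of_tendsto (hφx.prodMk_nhds hfy) <|
    hφ.mono fun i hi => (hgr _ hi).1

end IsICPA

theorem linear_along_segments_from_origin_general
    (d : ℕ) (Box : Set (Fin d → ℝ))
    (h0 : (0 : Fin d → ℝ) ∈ interior Box)
    (f : (Fin d → ℝ) → ℝ) (hicpa : IsICPA d Box f) (hht : AtHeightOne d Box f)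
    (hf0 : f 0 = 1) :
    ∀ v ∈ Box, ∀ t : ℝ, 0 ≤ t → t ≤ 1 →
      f (fun i => t * v i) = (1 - t) * f 0 + t * f v := by
  intro v hv t ht0 ht1
  change f (t • v) = _
  have hseg : ∀ τ ∈ Icc (0 : ℝ) 1, τ • v ∈ Box := fun τ hτ =>
    hicpa.convex.smul_mem_of_zero_mem (interior_subset h0) hv hτ
  have hconc : ConcaveOn ℝ (Icc 0 1) (fun τ : ℝ => f (τ • v)) :=
    (hicpa.concaveOn_s9.comp_linearMap (LinearMap.toSpanSingleton ℝ _ v)).subset hseg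
      (convex_Icc 0 1)
  have hg0 : f ((0 : ℝ) • v) = 1 := by rw [zero_smul, hf0]
  have key := affineOn_Icc_of_chordFromZeroMajorizes (g := fun τ : ℝ => f (τ • v))
    (fun t₁ ht₁ => ?_) (fun y hy => ?_) t ⟨ht0, ht1⟩
  · simpa [hf0] using key
  · obtain ⟨a, m, habs, hle⟩ :=
      hht.exists_supporting_along_ray (hseg t₁ (Ioo_subset_Icc_self ht₁))
    exact chordFromZeroMajorizes_of_supporting hconc hg0 ht₁ habs fun τ hτ => hle τ (hseg τ hτ)
  · refine hicpa.le_of_tendsto (by rwa [one_smul]) ?_ ?_ hy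
    · filter_upwards [Ioo_mem_nhdsLT (show (0 : ℝ) < 1 by norm_num)] with τ hτ
      exact hseg τ (Ioo_subset_Icc_self hτ)
    · have hcont : Continuous fun τ : ℝ => τ • v := continuous_id.smul continuous_const
      simpa using (hcont.tendsto 1).mono_left nhdsWithin_le_nhds

/-- If `f` is an integral concave piecewise-affine function at height one with `f 0 = 1`,
then `f` is affine along the segment from the origin to any point of `Box`. -/
theorem linear_along_segments_from_origin
    (d : ℕ) (hd : 0 < d) (Box : Set (Fin d → ℝ)) (hlat : IsLatticePolytope d Box)
    (h0 : (0 : Fin d → ℝ) ∈ interior Box)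
    (f : (Fin d → ℝ) → ℝ) (hicpa : IsICPA d Box f) (hht : AtHeightOne d Box f)
    (hf0 : f 0 = 1) :
    ∀ v ∈ Box, ∀ t : ℝ, 0 ≤ t → t ≤ 1 →
      f (fun i => t * v i) = (1 - t) * f 0 + t * f v :=
  linear_along_segments_from_origin_general d Box h0 f hicpa hht hf0

end
end
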